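/- For non-ideal storage, let $g(u^+, u^-) = p(\tfrac{u^+}{\eta^+} - \eta^- u^-) + D(u^+) + D(-u^-) + C(\tfrac{u^+}{\eta^+} - \eta^- u^- - c) + \tfrac{(s - \beta)(u^+ - u^-)}{V}$ on $[0, u_{\max}]^2$, where $D, C$ are differentiable convex with $D' \leq D'_{\max}$, $C' \leq C'_{\max}$, $p \leq p_{\max}$, $\eta^+ \in (0,1]$, $V > 0$. If $s < \beta - V\big(\tfrac{p_{\max}}{\eta^+} + D'_{\max} + \tfrac{1}{\eta^+} C'_{\max}\big)$, then any minimizer of $g$ has $u^+ = u_{\max}$. -/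

import Mathlib

/-!
Along the charging coordinate the cost has derivative
`p / ηp + D' u⁺ + C'(·) / ηp + (s - β) / V`, which the bounds on `p`, `D'`, `C'` and the
choice of `s` make negative everywhere. So for fixed `u⁻` the cost strictly decreases in `u⁺`,
and a minimizer over the box can only sit at `u⁺ = umax`.
-/

open Set

theorem StrictAntiOn.eq_right_of_isMinOn {α β : Type*} [LinearOrder α] [Preorder β]
    {f : α → β} {a b x : α} (hf : StrictAntiOn f (Icc a b)) (hx : x ∈ Icc a b)
    (hmin : IsMinOn f (Icc a b) x) : x = b := by
  by_contra hne
  have hb : b ∈ Icc a b := ⟨hx.1.trans hx.2, le_rfl⟩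
  exact (hf hx hb (hx.2.lt_of_ne hne)).not_ge (isMinOn_iff.mp hmin b hb)

/-- The cost of charging `up` and discharging `um` with a storage of efficiencies `ηp`, `ηm`. -/
noncomputable def storageCost (p ηp ηm c s β V : ℝ) (D C : ℝ → ℝ) (up um : ℝ) : ℝ :=
  p * (up / ηp - ηm * um) + D up + D (-um) + C (up / ηp - ηm * um - c) + (s - β) * (up - um) / V

theorem hasDerivAt_storageCost_charge (p ηp ηm c s β V : ℝ) {D C : ℝ → ℝ} (um up : ℝ)
    (hD : DifferentiableAt ℝ D up) (hC : DifferentiableAt ℝ C (up / ηp - ηm * um - c)) :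
    HasDerivAt (fun x => storageCost p ηp ηm c s β V D C x um)
      (p / ηp + deriv D up + deriv C (up / ηp - ηm * um - c) / ηp + (s - β) / V) up := by
  have hlevel : HasDerivAt (fun x : ℝ => x / ηp - ηm * um) (1 / ηp) up :=
    ((hasDerivAt_id up).div_const ηp).sub_const _
  have hC' := hC.hasDerivAt.comp up (hlevel.sub_const c)
  have hlin := (((hasDerivAt_id up).sub_const um).const_mul (s - β)).div_const V
  exact ((((hlevel.const_mul p).add hD.hasDerivAt).add_const (D (-um))).add hC').add hlin
    |>.congr_deriv (by ring)

theorem storageCost_marginal_neg {p pmax s β V ηp dD dC D'max C'max : ℝ}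
    (hp : p ≤ pmax) (hηp : 0 < ηp) (hV : 0 < V) (hdD : dD ≤ D'max) (hdC : dC ≤ C'max)
    (hs : s < β - V * (pmax / ηp + D'max + (1 / ηp) * C'max)) :
    p / ηp + dD + dC / ηp + (s - β) / V < 0 := by
  have hsV : (s - β) / V < -(pmax / ηp + D'max + (1 / ηp) * C'max) := by
    rw [div_lt_iff₀ hV]; linarith
  have hpη : p / ηp ≤ pmax / ηp := div_le_div_of_nonneg_right hp hηp.le
  have hCη : dC / ηp ≤ (1 / ηp) * C'max := by
    rw [one_div_mul_eq_div]; exact div_le_div_of_nonneg_right hdC hηp.le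
  linarith

theorem stmt_11_general (p pmax s β V c umax ηp ηm D'max C'max : ℝ) (D C : ℝ → ℝ)
    (hD : Differentiable ℝ D) (hC : Differentiable ℝ C)
    (hD' : ∀ x, deriv D x ≤ D'max) (hC' : ∀ x, deriv C x ≤ C'max)
    (hp : p ≤ pmax) (hηp : ηp ∈ Set.Ioc 0 1)
    (hV : 0 < V)
    (hs : s < β - V * (pmax / ηp + D'max + (1 / ηp) * C'max)) :
    let g : ℝ → ℝ → ℝ := fun up um =>
      p * (up / ηp - ηm * um) + D up + D (-um) +
        C (up / ηp - ηm * um - c) + (s - β) * (up - um) / V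
    ∀ up ∈ Set.Icc 0 umax, ∀ um ∈ Set.Icc 0 umax,
      (∀ vp ∈ Set.Icc 0 umax, ∀ vm ∈ Set.Icc 0 umax, g up um ≤ g vp vm) →
      up = umax := by
  intro g up hup um hum hmin
  have hanti : StrictAnti fun x => storageCost p ηp ηm c s β V D C x um :=
    strictAnti_of_hasDerivAt_neg
      (fun x => hasDerivAt_storageCost_charge p ηp ηm c s β V um x (hD x) (hC _))
      fun x => storageCost_marginal_neg hp hηp.1 hV (hD' x) (hC' _) hs
  exact hanti.strictAntiOn _ |>.eq_right_of_isMinOn hup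
    (isMinOn_iff.mpr fun vp hvp => hmin vp hvp um hum)

theorem stmt_11 (p pmax s β V c umax ηp ηm D'max C'max : ℝ) (D C : ℝ → ℝ)
    (hD : Differentiable ℝ D) (hC : Differentiable ℝ C)
    (hDconv : ConvexOn ℝ Set.univ D) (hCconv : ConvexOn ℝ Set.univ C)
    (hD' : ∀ x, deriv D x ≤ D'max) (hC' : ∀ x, deriv C x ≤ C'max)
    (hp : p ≤ pmax) (hηp : ηp ∈ Set.Ioc 0 1) (hηm : ηm ∈ Set.Ioc 0 1)
    (hV : 0 < V) (humax : 0 < umax)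
    (hs : s < β - V * (pmax / ηp + D'max + (1 / ηp) * C'max)) :
    let g : ℝ → ℝ → ℝ := fun up um =>
      p * (up / ηp - ηm * um) + D up + D (-um) +
        C (up / ηp - ηm * um - c) + (s - β) * (up - um) / V
    ∀ up ∈ Set.Icc 0 umax, ∀ um ∈ Set.Icc 0 umax,
      (∀ vp ∈ Set.Icc 0 umax, ∀ vm ∈ Set.Icc 0 umax, g up um ≤ g vp vm) →
      up = umax :=
  stmt_11_general p pmax s β V c umax ηp ηm D'max C'max D C hD hC hD' hC' hp hηp hV hs
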